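/- arXiv:1806.10500 — 2 statements merged into one kernel-verified Lean document; each statement's English description precedes it below -/
import Mathlib

section
/- Let T be the 3×3 matrix with rows (0,1,2), (1,0,3), (2,3,0) and let B_n = M_n(2,3,1). For every n ≥ 5, the direct sum T ⊕ B_n is product-irregular. -/
/-!
Every entry of `B_n = M_n(2,3,1)` lies in `{0,1,2,3}`, so the product of a row of `B_n` is
`2^a 3^b`, where `a` and `b` count the entries `2` and `3` of that row, and both counts are
explicit in the row index. Two distinct rows with the same number of `2`s are the consecutive
rows `⌈n/2⌉` and `⌈n/2⌉ + 1` (1-based); the entry `1` of the latter row gives them different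
numbers of `3`s. Every row of `B_n` has at least `n - 2 ≥ 3` entries `≥ 2`, so its product is
at least `8`, above the row products `2, 3, 6` of `T`.
-/

/-- The matrix `M_n(x,y,z)` (1-based indices translated to `Fin n`): zero diagonal,
`x` when `j ≤ n - i + 1` (and `i ≠ j`), `z` at positions `(k,n)` and `(n,k)` where
`k = ⌈n/2⌉ + 1`, and `y` otherwise. -/
def Mmat (n x y z : ℕ) : Matrix (Fin n) (Fin n) ℕ := fun i j =>
  if i = j then 0
  else if (j : ℕ) + 1 ≤ n - (i : ℕ) then x
  else if (((i : ℕ) + 1 = (n + 1) / 2 + 1 ∧ (j : ℕ) + 1 = n) ∨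
           ((i : ℕ) + 1 = n ∧ (j : ℕ) + 1 = (n + 1) / 2 + 1)) then z
  else y

/-- Product of the nonzero entries of row `i`. -/
def rowProd {ι : Type*} [Fintype ι] [DecidableEq ι] (M : Matrix ι ι ℕ) (i : ι) : ℕ :=
  ∏ j ∈ Finset.univ.filter (fun j => M i j ≠ 0), M i j

/-- A square matrix is product-irregular if distinct rows have distinct products of
nonzero entries. -/
def MatPI {ι : Type*} [Fintype ι] [DecidableEq ι] (M : Matrix ι ι ℕ) : Prop :=
  Function.Injective (rowProd M)

open Finset Matrix

section RowProd

variable {ι κ : Type*} [Fintype ι] [DecidableEq ι] [Fintype κ] [DecidableEq κ]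

lemma rowProd_eq_prod_ite (M : Matrix ι ι ℕ) (i : ι) :
    rowProd M i = ∏ j, if M i j = 0 then 1 else M i j := by
  rw [rowProd, prod_filter]
  exact prod_congr rfl fun j _ => by split_ifs <;> simp_all

lemma rowProd_fromBlocks_inl (A : Matrix ι ι ℕ) (D : Matrix κ κ ℕ) (i : ι) :
    rowProd (fromBlocks A 0 0 D) (Sum.inl i) = rowProd A i := by
  rw [rowProd_eq_prod_ite, rowProd_eq_prod_ite, Fintype.prod_sum_type]
  simp only [fromBlocks_apply₁₁, fromBlocks_apply₁₂, Matrix.zero_apply, ite_true,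
    prod_const_one, mul_one]
  -- the two sides differ only in their `Decidable` instances
  rfl

lemma rowProd_fromBlocks_inr (A : Matrix ι ι ℕ) (D : Matrix κ κ ℕ) (i : κ) :
    rowProd (fromBlocks A 0 0 D) (Sum.inr i) = rowProd D i := by
  rw [rowProd_eq_prod_ite, rowProd_eq_prod_ite, Fintype.prod_sum_type]
  simp only [fromBlocks_apply₂₁, fromBlocks_apply₂₂, Matrix.zero_apply, ite_true,
    prod_const_one, one_mul]
  rfl

lemma MatPI.fromBlocks {A : Matrix ι ι ℕ} {D : Matrix κ κ ℕ} (hA : MatPI A) (hD : MatPI D)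
    (hAD : ∀ i j, rowProd A i < rowProd D j) : MatPI (Matrix.fromBlocks A 0 0 D) := by
  rintro (i | i) (j | j) h <;>
    simp only [rowProd_fromBlocks_inl, rowProd_fromBlocks_inr] at h
  · exact congrArg _ (hA h)
  · exact absurd h (hAD i j).ne
  · exact absurd h (hAD j i).ne'
  · exact congrArg _ (hD h)

lemma rowProd_eq_two_pow_mul_three_pow (M : Matrix ι ι ℕ) (i : ι) (hM : ∀ j, M i j ≤ 3) :
    rowProd M i = 2 ^ #{j | M i j = 2} * 3 ^ #{j | M i j = 3} := by
  rw [rowProd_eq_prod_ite, ← prod_const, ← prod_const, prod_filter, prod_filter,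
    ← prod_mul_distrib]
  refine prod_congr rfl fun j _ => ?_
  have := hM j
  interval_cases M i j <;> rfl

end RowProd

lemma Nat.Prime.pow_mul_pow_inj {p q a b c d : ℕ} (hp : p.Prime) (hq : q.Prime) (hpq : p ≠ q)
    (h : p ^ a * q ^ b = p ^ c * q ^ d) : a = c ∧ b = d := by
  have key (r : ℕ) (hr : r.Prime) (e f : ℕ) :
      (p ^ e * q ^ f).factorization r = (if p = r then e else 0) + (if q = r then f else 0) := by
    rw [Nat.factorization_mul (pow_ne_zero _ hp.ne_zero) (pow_ne_zero _ hq.ne_zero)]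
    simp [hp.factorization, hq.factorization, Finsupp.single_apply]
  have hp' := congrArg (·.factorization p) h
  have hq' := congrArg (·.factorization q) h
  simp only [key p hp, key q hq, hpq, hpq.symm, if_true, if_false] at hp' hq'
  omega

lemma card_filter_fin_val {n : ℕ} (p : ℕ → Prop) [DecidablePred p] :
    #{j : Fin n | p j} = #{k ∈ range n | p k} := by
  rw [card_filter, card_filter]
  exact Fin.sum_univ_eq_sum_range (fun k => if p k then 1 else 0) n

namespace Mmat

variable {n x y z : ℕ}

def xCount (n i : ℕ) : ℕ := if 2 * i < n then n - 1 - i else n - i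

-- The 0-based rows `(n + 1) / 2` and `n - 1` each lose one `y` to the entry `z`.
def yCount (n i : ℕ) : ℕ :=
  if 2 * i < n then i else if i = (n + 1) / 2 ∨ i = n - 1 then i - 2 else i - 1

lemma apply_eq_x_iff (hx : x ≠ 0) (hxy : x ≠ y) (hxz : x ≠ z) (i j : Fin n) :
    Mmat n x y z i j = x ↔ (i : ℕ) ≠ j ∧ (j : ℕ) + 1 ≤ n - i := by
  unfold Mmat
  split_ifs <;> grind

lemma apply_eq_y_iff (hy : y ≠ 0) (hxy : x ≠ y) (hyz : y ≠ z) (i j : Fin n) :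
    Mmat n x y z i j = y ↔ (i : ℕ) ≠ j ∧ n - i < (j : ℕ) + 1 ∧
      ¬ (((i : ℕ) = (n + 1) / 2 ∧ (j : ℕ) = n - 1) ∨
         ((i : ℕ) = n - 1 ∧ (j : ℕ) = (n + 1) / 2)) := by
  unfold Mmat
  split_ifs <;> grind

lemma card_eq_x (hx : x ≠ 0) (hxy : x ≠ y) (hxz : x ≠ z) (i : Fin n) :
    #{j | Mmat n x y z i j = x} = xCount n i := by
  simp_rw [apply_eq_x_iff hx hxy hxz]
  rw [card_filter_fin_val (fun k => (i : ℕ) ≠ k ∧ k + 1 ≤ n - i)]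
  have hi := i.isLt
  unfold xCount
  split_ifs
  · trans #((range (n - i)).erase i)
    · congr 1; ext; simp only [mem_filter, mem_range, mem_erase]; omega
    · rw [card_erase_of_mem (by simp only [mem_range]; omega), card_range]; omega
  · trans #(range (n - i))
    · congr 1; ext; simp only [mem_filter, mem_range]; omega
    · exact card_range _

lemma card_eq_y (hn : 4 ≤ n) (hy : y ≠ 0) (hxy : x ≠ y) (hyz : y ≠ z) (i : Fin n) :
    #{j | Mmat n x y z i j = y} = yCount n i := by
  simp_rw [apply_eq_y_iff hy hxy hyz]
  rw [card_filter_fin_val (fun k => (i : ℕ) ≠ k ∧ n - i < k + 1 ∧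
      ¬ (((i : ℕ) = (n + 1) / 2 ∧ k = n - 1) ∨ ((i : ℕ) = n - 1 ∧ k = (n + 1) / 2)))]
  have hi := i.isLt
  unfold yCount
  split_ifs
  · trans #(Ico (n - i) n)
    · congr 1; ext; simp only [mem_filter, mem_range, mem_Ico]; omega
    · rw [Nat.card_Ico]; omega
  · trans #(((Ico (n - i) n).erase ((n + 1) / 2)).erase (n - 1))
    · congr 1; ext; simp only [mem_filter, mem_range, mem_Ico, mem_erase]; omega
    · rw [card_erase_of_mem (by simp only [mem_erase, mem_Ico]; omega),
        card_erase_of_mem (by simp only [mem_Ico]; omega), Nat.card_Ico]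
      omega
  · trans #((Ico (n - i) n).erase i)
    · congr 1; ext; simp only [mem_filter, mem_range, mem_Ico, mem_erase]; omega
    · rw [card_erase_of_mem (by simp only [mem_Ico]; omega), Nat.card_Ico]; omega

lemma rowProd_two_three_one (hn : 4 ≤ n) (i : Fin n) :
    rowProd (Mmat n 2 3 1) i = 2 ^ xCount n i * 3 ^ yCount n i := by
  have hle : ∀ j, Mmat n 2 3 1 i j ≤ 3 := fun j => by unfold Mmat; split_ifs <;> norm_num
  rw [rowProd_eq_two_pow_mul_three_pow _ i hle, card_eq_x (by norm_num) (by norm_num)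
    (by norm_num), card_eq_y hn (by norm_num) (by norm_num) (by norm_num)]

lemma xCount_add_yCount_ge (hn : 5 ≤ n) {i : ℕ} (hi : i < n) :
    3 ≤ xCount n i + yCount n i := by
  unfold xCount yCount
  split_ifs <;> omega

lemma eq_of_xCount_eq_of_yCount_eq (hn : 4 ≤ n) {i i' : ℕ} (hi : i < n) (hi' : i' < n)
    (hx : xCount n i = xCount n i') (hy : yCount n i = yCount n i') : i = i' := by
  simp only [xCount, yCount] at hx hy
  split_ifs at hx hy <;> omega

lemma matPI_two_three_one (hn : 4 ≤ n) : MatPI (Mmat n 2 3 1) := by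
  intro i i' h
  rw [rowProd_two_three_one hn, rowProd_two_three_one hn] at h
  obtain ⟨hx, hy⟩ := Nat.prime_two.pow_mul_pow_inj Nat.prime_three (by norm_num) h
  exact Fin.ext (eq_of_xCount_eq_of_yCount_eq hn i.isLt i'.isLt hx hy)

lemma eight_le_rowProd_two_three_one (hn : 5 ≤ n) (i : Fin n) :
    8 ≤ rowProd (Mmat n 2 3 1) i :=
  calc 8 = 2 ^ 3 := rfl
    _ ≤ 2 ^ (xCount n i + yCount n i) :=
      Nat.pow_le_pow_right two_pos (xCount_add_yCount_ge hn i.isLt)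
    _ = 2 ^ xCount n i * 2 ^ yCount n i := pow_add _ _ _
    _ ≤ 2 ^ xCount n i * 3 ^ yCount n i := by gcongr; norm_num
    _ = rowProd (Mmat n 2 3 1) i := (rowProd_two_three_one (by omega) i).symm

end Mmat

lemma matPI_T : MatPI !![0, 1, 2; 1, 0, 3; 2, 3, 0] := by
  unfold MatPI
  decide

lemma rowProd_T_le_six (i : Fin 3) : rowProd !![0, 1, 2; 1, 0, 3; 2, 3, 0] i ≤ 6 := by
  revert i
  decide

/-- For every `n ≥ 5`, `T ⊕ B_n` is product-irregular, where `T` is the weighted adjacency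
matrix of `K_3` with rows `(0,1,2), (1,0,3), (2,3,0)` and `B_n = M_n(2,3,1)`. -/
theorem stmt_5 (n : ℕ) (hn : 5 ≤ n) :
    MatPI (Matrix.fromBlocks (!![0, 1, 2; 1, 0, 3; 2, 3, 0] : Matrix (Fin 3) (Fin 3) ℕ)
      0 0 (Mmat n 2 3 1)) :=
  matPI_T.fromBlocks (Mmat.matPI_two_three_one (by omega)) fun i j =>
    (rowProd_T_le_six i).trans_lt <|
      (by norm_num : 6 < 8).trans_le (Mmat.eight_le_rowProd_two_three_one hn j)
end

section
/- For every n ≥ 4, the graph obtained from K_1 + K_n by joining the isolated vertex to a vertex of K_n (i.e., K_n with a pendant vertex attached) has product irregularity strength 3. -/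
/-!
With labels in `{1, 2}` the product degree of `v` is `2 ^ d v`, where `d` is the degree in the
subgraph of edges labelled `2`. A graph on at least two vertices never has pairwise distinct
degrees (degrees `0` and `|V| - 1` cannot both occur), so no `{1, 2}`-labelling of such a graph
is product-irregular.

For `ps ≤ 3`, number the clique vertices `0, …, n - 1` and give the edge `{i, j}` the label `2`
when `i + j ≥ n`: vertex `i` then has product degree `2 ^ i` for `2 i < n` and `2 ^ (i - 1)`
otherwise. The only collision, between `⌈n/2⌉ - 1` and `⌈n/2⌉`, is removed by labelling the edge
`{0, ⌈n/2⌉}` with `3`; every other edge, the pendant one included, gets `1`, so the pendant vertex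
is the only vertex of product degree `1`.
-/

open Finset

open scoped Classical in
/-- The product degree of vertex `v`: the product of the labels of the edges incident with `v`. -/
noncomputable def pdeg {V : Type*} [Fintype V] (G : SimpleGraph V) (w : Sym2 V → ℕ) (v : V) : ℕ :=
  ∏ u ∈ Finset.univ.filter (fun u => G.Adj v u), w s(v, u)

/-- A labelling is product-irregular if distinct vertices have distinct product degrees. -/
def ProductIrregular {V : Type*} [Fintype V] (G : SimpleGraph V) (w : Sym2 V → ℕ) : Prop :=
  Function.Injective (pdeg G w)

/-- The product irregularity strength: the least `s` admitting a product-irregular labelling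
with labels in `{1,…,s}`. -/
noncomputable def ps {V : Type*} [Fintype V] (G : SimpleGraph V) : ℕ :=
  sInf {s : ℕ | ∃ w : Sym2 V → ℕ,
    (∀ u v : V, G.Adj u v → w s(u, v) ∈ Finset.Icc 1 s) ∧ ProductIrregular G w}
/-- The disjoint union `K_n + K_m` of two complete graphs. -/
def cliquePair (n m : ℕ) : SimpleGraph (Fin n ⊕ Fin m) where
  Adj a b := a ≠ b ∧ a.isLeft = b.isLeft
  symm := ⟨fun a b h => ⟨h.1.symm, h.2.symm⟩⟩
  loopless := ⟨fun a h => h.1 rfl⟩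

/-- Adding a single edge joining `u` and `v`. -/
def addEdge {V : Type*} (G : SimpleGraph V) (u v : V) : SimpleGraph V :=
  G ⊔ SimpleGraph.fromEdgeSet {s(u, v)}

namespace SimpleGraph

variable {V : Type*} [Fintype V]

theorem not_injective_degree [Nontrivial V] (H : SimpleGraph V) [DecidableRel H.Adj] :
    ¬ Function.Injective (fun v => H.degree v) := by
  intro hinj
  let d : V → Fin (Fintype.card V) := fun v => ⟨H.degree v, H.degree_lt_card_verts v⟩
  have hd : Function.Surjective d :=
    ((Fintype.bijective_iff_injective_and_card d).2
      ⟨fun u v h => hinj (Fin.val_eq_of_eq h), (Fintype.card_fin _).symm⟩).2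
  have hcard := Fintype.one_lt_card (α := V)
  obtain ⟨v, hv⟩ := hd ⟨Fintype.card V - 1, by omega⟩
  obtain ⟨u, hu⟩ := hd ⟨0, by omega⟩
  have huniv : H.IsUniversal v := (H.degree_eq_card_sub_one v).1 (Fin.val_eq_of_eq hv)
  have hiso : H.IsIsolated u := (H.degree_eq_zero u).1 (Fin.val_eq_of_eq hu)
  have hne : v ≠ u := by
    rintro rfl
    have := congrArg Fin.val (hv.symm.trans hu)
    simp only at this
    omega
  exact hiso v (huniv hne).symm

end SimpleGraph

def labelSubgraph {V : Type*} (G : SimpleGraph V) (w : Sym2 V → ℕ) (k : ℕ) : SimpleGraph V where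
  Adj u v := G.Adj u v ∧ w s(u, v) = k
  symm := ⟨fun u _ h => ⟨h.1.symm, Sym2.eq_swap (a := u) ▸ h.2⟩⟩
  loopless := ⟨fun v h => G.loopless.irrefl v h.1⟩

section Labelling

variable {V : Type*} [Fintype V] (G : SimpleGraph V) (w : Sym2 V → ℕ)

open scoped Classical in
theorem pdeg_eq_prod_ite (v : V) : pdeg G w v = ∏ u, if G.Adj v u then w s(v, u) else 1 :=
  prod_filter _ _

variable {G w}

open scoped Classical in
theorem pdeg_eq_two_pow_degree (hw : ∀ u v, G.Adj u v → w s(u, v) ∈ Icc 1 2) (v : V) :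
    pdeg G w v = 2 ^ (labelSubgraph G w 2).degree v := by
  have hlabel : ∀ u, (if G.Adj v u then w s(v, u) else 1) =
      if (labelSubgraph G w 2).Adj v u then 2 else 1 := by
    intro u
    by_cases hvu : G.Adj v u
    · have := mem_Icc.1 (hw v u hvu)
      obtain h | h : w s(v, u) = 1 ∨ w s(v, u) = 2 := by omega
      all_goals simp [labelSubgraph, hvu, h]
    · simp [labelSubgraph, hvu]
  rw [pdeg_eq_prod_ite, Fintype.prod_congr _ _ hlabel, prod_ite, prod_const_one, mul_one,
    prod_const, ← SimpleGraph.card_neighborFinset_eq_degree,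
    SimpleGraph.neighborFinset_eq_filter]

theorem not_productIrregular_of_mem_Icc_one_two [Nontrivial V]
    (hw : ∀ u v, G.Adj u v → w s(u, v) ∈ Icc 1 2) : ¬ ProductIrregular G w := by
  classical
  intro hirr
  refine (labelSubgraph G w 2).not_injective_degree fun u v huv => hirr ?_
  simp only [pdeg_eq_two_pow_degree hw, huv]

theorem ps_eq_three [Nontrivial V]
    (h : ∃ w : Sym2 V → ℕ, (∀ u v, G.Adj u v → w s(u, v) ∈ Icc 1 3) ∧ ProductIrregular G w) :
    ps G = 3 := by
  refine le_antisymm (Nat.sInf_le h) (le_csInf ⟨3, h⟩ ?_)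
  rintro s ⟨w, hw, hirr⟩
  by_contra! hs
  refine not_productIrregular_of_mem_Icc_one_two (fun u v huv => ?_) hirr
  have := mem_Icc.1 (hw u v huv)
  exact mem_Icc.2 ⟨this.1, by omega⟩

end Labelling

theorem two_pow_mul_three_pow_injective :
    Function.Injective fun e : ℕ × ℕ => 2 ^ e.1 * 3 ^ e.2 := by
  have hfac : ∀ e : ℕ × ℕ, (2 ^ e.1 * 3 ^ e.2).factorization =
      Finsupp.single 2 e.1 + Finsupp.single 3 e.2 := fun e => by
    rw [Nat.factorization_mul (by positivity) (by positivity),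
      Nat.prime_two.factorization_pow, Nat.prime_three.factorization_pow]
  intro e f h
  have h' := congrArg Nat.factorization h
  simp only [hfac] at h'
  exact Prod.ext (by simpa using congrArg (· 2) h') (by simpa using congrArg (· 3) h')

theorem productIrregular_of_pdeg_eq_two_pow_mul_three_pow {V : Type*} [Fintype V]
    {G : SimpleGraph V} {w : Sym2 V → ℕ} (e : V → ℕ × ℕ) (he : Function.Injective e)
    (hpdeg : ∀ v, pdeg G w v = 2 ^ (e v).1 * 3 ^ (e v).2) : ProductIrregular G w :=
  fun u v huv => he <| two_pow_mul_three_pow_injective <| by simpa only [hpdeg] using huv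

theorem Fin.card_filter_val_eq (n : ℕ) (p : ℕ → Prop) [DecidablePred p] :
    #{j : Fin n | p j} = #{j ∈ range n | p j} := by
  rw [← Nat.Iio_eq_range, ← Fin.map_valEmbedding_univ, filter_map, card_map]
  rfl

theorem card_filter_ne_and_le_add {n i : ℕ} (hi : i < n) :
    #{j ∈ range n | i ≠ j ∧ n ≤ i + j} = if n ≤ 2 * i then i - 1 else i := by
  have hset : {j ∈ range n | i ≠ j ∧ n ≤ i + j} = (Ico (n - i) n).erase i := by
    ext j
    simp only [mem_filter, mem_range, mem_erase, mem_Ico]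
    omega
  rw [hset]
  split_ifs with h
  · rw [card_erase_of_mem (mem_Ico.2 (by omega)), Nat.card_Ico]
    omega
  · rw [erase_eq_of_notMem (by simp only [mem_Ico]; omega), Nat.card_Ico]
    omega

theorem card_filter_ne_and_mul_eq_zero_and_add_eq {n i m : ℕ} (hm : 0 < m) (hmn : m < n) :
    #{j ∈ range n | i ≠ j ∧ i * j = 0 ∧ i + j = m} = if i = 0 ∨ i = m then 1 else 0 := by
  split_ifs with h
  · rw [card_eq_one]
    refine ⟨m - i, ?_⟩
    ext j
    simp only [mem_filter, mem_range, mem_singleton, mul_eq_zero]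
    omega
  · rw [card_eq_zero, filter_eq_empty_iff]
    intro j _
    simp only [mul_eq_zero]
    omega

def cliqueLabel (n i j : ℕ) : ℕ :=
  if n ≤ i + j then 2 else if i * j = 0 ∧ i + j = (n + 1) / 2 then 3 else 1

def cliqueExponents (n i : ℕ) : ℕ × ℕ :=
  (if n ≤ 2 * i then i - 1 else i, if i = 0 ∨ i = (n + 1) / 2 then 1 else 0)

theorem cliqueExponents_ne_zero_zero {n : ℕ} (hn : 3 ≤ n) (i : ℕ) :
    cliqueExponents n i ≠ (0, 0) := by
  intro h
  simp only [cliqueExponents, Prod.mk.injEq] at h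
  obtain ⟨h2, h3⟩ := h
  split_ifs at h2 h3 <;> omega

theorem cliqueExponents_injective {n : ℕ} (hn : 3 ≤ n) :
    Function.Injective (cliqueExponents n) := by
  intro i j h
  simp only [cliqueExponents, Prod.mk.injEq] at h
  obtain ⟨h2, h3⟩ := h
  split_ifs at h2 h3 <;> omega

theorem prod_cliqueLabel {n : ℕ} (hn : 2 ≤ n) (i : Fin n) :
    ∏ j : Fin n, (if i ≠ j then cliqueLabel n i j else 1) =
      2 ^ (cliqueExponents n i).1 * 3 ^ (cliqueExponents n i).2 := by
  have hfactor : ∀ j : Fin n, (if i ≠ j then cliqueLabel n i j else 1) =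
      (if (i : ℕ) ≠ j ∧ n ≤ i + j then 2 else 1) *
        (if (i : ℕ) ≠ j ∧ (i : ℕ) * j = 0 ∧ (i : ℕ) + j = (n + 1) / 2 then 3 else 1) := by
    intro j
    simp only [ne_eq, Fin.ext_iff, cliqueLabel]
    split_ifs <;> omega
  rw [Fintype.prod_congr _ _ hfactor, prod_mul_distrib, prod_ite, prod_ite, prod_const_one,
    prod_const_one, mul_one, mul_one, prod_const, prod_const,
    Fin.card_filter_val_eq n (fun j => (i : ℕ) ≠ j ∧ n ≤ i + j),
    Fin.card_filter_val_eq n fun j => (i : ℕ) ≠ j ∧ (i : ℕ) * j = 0 ∧ (i : ℕ) + j = (n + 1) / 2,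
    card_filter_ne_and_le_add i.isLt,
    card_filter_ne_and_mul_eq_zero_and_add_eq (by omega) (by omega)]
  rfl

def pendantClique (n : ℕ) (b : Fin n) : SimpleGraph (Fin 1 ⊕ Fin n) :=
  addEdge (cliquePair 1 n) (Sum.inl 0) (Sum.inr b)

section PendantClique

variable {n : ℕ} {b : Fin n}

@[simp]
theorem pendantClique_adj_inr_inr (i j : Fin n) :
    (pendantClique n b).Adj (Sum.inr i) (Sum.inr j) ↔ i ≠ j := by
  simp [pendantClique, addEdge, cliquePair]

def pendantCliqueLabel (n : ℕ) : Sym2 (Fin 1 ⊕ Fin n) → ℕ :=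
  Sym2.lift ⟨fun
    | .inr i, .inr j => cliqueLabel n i j
    | _, _ => 1, by
    rintro (_ | i) (_ | j) <;> simp only [cliqueLabel, add_comm, mul_comm]⟩

def pendantCliqueExponents (n : ℕ) : Fin 1 ⊕ Fin n → ℕ × ℕ :=
  Sum.elim (fun _ => (0, 0)) fun i => cliqueExponents n i

theorem pendantCliqueLabel_mem_Icc (x y : Fin 1 ⊕ Fin n) :
    pendantCliqueLabel n s(x, y) ∈ Icc 1 3 := by
  rcases x with _ | i <;> rcases y with _ | j <;>
    simp [pendantCliqueLabel, cliqueLabel]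
  split_ifs <;> simp

theorem pdeg_pendantCliqueLabel (hn : 2 ≤ n) (v : Fin 1 ⊕ Fin n) :
    pdeg (pendantClique n b) (pendantCliqueLabel n) v =
      2 ^ (pendantCliqueExponents n v).1 * 3 ^ (pendantCliqueExponents n v).2 := by
  rw [pdeg_eq_prod_ite, Fintype.prod_sum_type]
  rcases v with _ | i
  · simp [pendantCliqueLabel, pendantCliqueExponents]
  · simpa [pendantCliqueLabel, pendantCliqueExponents] using prod_cliqueLabel hn i

theorem pendantCliqueExponents_injective (hn : 3 ≤ n) :
    Function.Injective (pendantCliqueExponents n) :=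
  Function.injective_of_subsingleton _ |>.sumElim
    ((cliqueExponents_injective hn).comp Fin.val_injective)
    fun _ i => (cliqueExponents_ne_zero_zero hn i).symm

end PendantClique

/-- For every `n ≥ 4`, `K_n` with a pendant vertex attached has product irregularity
strength `3`. -/
theorem stmt_7 (n : ℕ) (hn : 4 ≤ n) (b : Fin n) :
    ps (addEdge (cliquePair 1 n) (Sum.inl 0) (Sum.inr b)) = 3 := by
  have : Nontrivial (Fin 1 ⊕ Fin n) := ⟨⟨Sum.inl 0, Sum.inr b, Sum.inl_ne_inr⟩⟩
  refine ps_eq_three ⟨pendantCliqueLabel n, fun u v _ => pendantCliqueLabel_mem_Icc u v, ?_⟩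
  exact productIrregular_of_pdeg_eq_two_pow_mul_three_pow (G := pendantClique n b) _
    (pendantCliqueExponents_injective (by omega)) (pdeg_pendantCliqueLabel (by omega))
end
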